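/- Let d be an odd positive integer and let P be the d × d parity matrix over ℂ, with entries P j k = 1 if j = −k in ZMod d and 0 otherwise. Then Π⁺_W = (1/2) • (1 + P) and Π⁻_W = (1/2) • (1 − P) are orthogonal projections of ranks (d+1)/2 and (d−1)/2 respectively, and for each sign, setting Π^±_q = (D q) * Π^±_W * (D q)ᴴ where D q are the Weyl–Heisenberg displacement operators, one has ∑_{q ∈ (ZMod d)²} Π^±_q = (d(d±1)/2) • 1 and Tr(Π^±_q * Π^±_r) = (d ± 2)/4 for all q ≠ r; i.e., the Wigner families {Π^±_q} are symmetric tight fusion frames of rank (d±1)/2. -/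

import Mathlib

open Matrix

/-- `τ = -exp(π i / d)`. -/
noncomputable def tau (d : ℕ) : ℂ := -Complex.exp (Real.pi * Complex.I / d)

/-- The Weyl–Heisenberg displacement operator `D p` for odd `d`, indexed over `ZMod d`:
its `(j,k)` entry is `τ^(p₂(p₁+2j))` if `j = k + p₁` and `0` otherwise (exponents taken in
`ZMod d`, which is well defined since `τ^d = 1` for odd `d`). -/
noncomputable def Disp (d : ℕ) [NeZero d] (p : ZMod d × ZMod d) :
    Matrix (ZMod d) (ZMod d) ℂ :=
  Matrix.of fun j k => if j = k + p.1 then tau d ^ (p.2 * (p.1 + 2 * j)).val else 0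

/-!
Write `ψ` for the standard additive character `ZMod.stdAddChar` of `ZMod d`. Since `d` is odd,
`τ = ψ(2⁻¹)`, so conjugation by a displacement operator acts entrywise as
`(D q * M * (D q)ᴴ) j k = ψ(q₂ (j - k)) * M (j - q₁) (k - q₁)`.

The parity matrix `P` is a Hermitian involution of trace `1`, so `Π± = (1 ± P)/2` are orthogonal
projections of trace, hence rank, `(d ± 1)/2`, and `D q * Π± * (D q)ᴴ = (1 ± A q)/2` for the
phase-point operators `A q = D q * P * (D q)ᴴ`, with entries `[j + k = 2 q₁] ψ(q₂ (j - k))`.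
Orthogonality of characters gives `∑ q, A q = d • 1`, `tr (A q) = 1` and `tr (A q * A r) = 0`
for `q ≠ r`; expanding the products of `(1 ± A q)/2` then yields the frame sums and the
pairwise traces `(d ± 2)/4`.
-/

namespace Matrix

variable {n : Type*} [DecidableEq n]

theorem isHermitian_half_smul_one_add {Q : Matrix n n ℂ} (hQ : Q.IsHermitian) :
    ((1 / 2 : ℂ) • (1 + Q)).IsHermitian :=
  (isHermitian_one.add hQ).smul (by simp [IsSelfAdjoint])

theorem sum_half_smul_one_add {ι : Type*} [Fintype ι] {A : ι → Matrix n n ℂ} {c : ℂ}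
    (hA : ∑ i, A i = c • 1) :
    ∑ i, (1 / 2 : ℂ) • (1 + A i) = ((Fintype.card ι + c) / 2) • 1 := by
  rw [← Finset.smul_sum, Finset.sum_add_distrib, hA, Finset.sum_const, Finset.card_univ,
    ← Nat.cast_smul_eq_nsmul ℂ, ← add_smul, smul_smul, one_div, inv_mul_eq_div]

variable [Fintype n]

theorem rank_eq_trace_of_isIdempotentElem {K : Type*} [Field K] {e : Matrix n n K}
    (he : IsIdempotentElem e) : (e.rank : K) = e.trace := by
  have hlin : IsIdempotentElem e.toLin' := he.map Matrix.toLinAlgEquiv'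
  rw [← trace_toLin'_eq, (LinearMap.IsIdempotentElem.isProj_range _ hlin).trace,
    rank_eq_finrank_range_toLin e (Pi.basisFun K n) (Pi.basisFun K n), toLin_eq_toLin']

variable {Q : Matrix n n ℂ}

theorem isIdempotentElem_half_smul_one_add (hQ : Q * Q = 1) :
    IsIdempotentElem ((1 / 2 : ℂ) • (1 + Q)) := by
  simp only [IsIdempotentElem, smul_mul_smul_comm, add_mul, mul_add, one_mul, mul_one, hQ]
  module

theorem rank_half_smul_one_add (hQ : Q * Q = 1) :
    (((1 / 2 : ℂ) • (1 + Q)).rank : ℂ) = (Fintype.card n + Q.trace) / 2 := by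
  rw [rank_eq_trace_of_isIdempotentElem (isIdempotentElem_half_smul_one_add hQ), trace_smul,
    trace_add, trace_one, smul_eq_mul]
  ring

theorem mul_half_smul_one_add_mul_conjTranspose {U : Matrix n n ℂ} (hU : U * Uᴴ = 1) :
    U * ((1 / 2 : ℂ) • (1 + Q)) * Uᴴ = (1 / 2 : ℂ) • (1 + U * Q * Uᴴ) := by
  rw [Matrix.mul_smul, Matrix.smul_mul, mul_add, add_mul, mul_one, hU]

theorem trace_half_smul_one_add_mul (A B : Matrix n n ℂ) :
    ((1 / 2 : ℂ) • (1 + A) * ((1 / 2 : ℂ) • (1 + B))).trace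
      = (Fintype.card n + A.trace + B.trace + (A * B).trace) / 4 := by
  simp only [smul_mul_smul_comm, add_mul, mul_add, one_mul, mul_one, trace_smul, trace_add,
    trace_one, smul_eq_mul]
  ring

end Matrix

theorem Odd.eq_of_sq_eq_sq_of_pow_eq_one {M : Type*} [Monoid M] {d : ℕ} (hd : Odd d)
    {z w : M} (hz : z ^ d = 1) (hw : w ^ d = 1) (h : z ^ 2 = w ^ 2) : z = w := by
  obtain ⟨k, rfl⟩ := hd
  have key : ∀ u : M, u ^ (2 * k + 1) = 1 → u = (u ^ 2) ^ (k + 1) := fun u hu => by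
    rw [← pow_mul, show 2 * (k + 1) = 2 * k + 1 + 1 by ring, pow_succ, hu, one_mul]
  rw [key z hz, key w hw, h]

namespace ZMod

variable {d : ℕ}

theorem isUnit_two_of_odd (hd : Odd d) : IsUnit (2 : ZMod d) := by
  simpa using (isUnit_iff_coprime 2 d).mpr (Nat.coprime_two_left.mpr hd)

theorem two_mul_inv_two_of_odd (hd : Odd d) : (2 : ZMod d) * 2⁻¹ = 1 :=
  mul_inv_of_unit _ (isUnit_two_of_odd hd)

theorem eq_two_mul_iff_of_odd (hd : Odd d) {a b : ZMod d} : a = 2 * b ↔ b = 2⁻¹ * a := by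
  constructor <;> rintro rfl
  · rw [← mul_assoc, mul_comm 2⁻¹, two_mul_inv_two_of_odd hd, one_mul]
  · rw [← mul_assoc, two_mul_inv_two_of_odd hd, one_mul]

theorem sum_stdAddChar_mul [NeZero d] (c : ZMod d) :
    ∑ x : ZMod d, stdAddChar (x * c) = if c = 0 then (d : ℂ) else 0 := by
  rw [AddChar.sum_mulShift c (isPrimitive_stdAddChar d), card, Nat.cast_ite, Nat.cast_zero]

end ZMod

section WignerFrames

open ZMod

variable {d : ℕ}

def parity (d : ℕ) : Matrix (ZMod d) (ZMod d) ℂ := of fun j k => if j = -k then 1 else 0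

theorem parity_isHermitian : (parity d).IsHermitian := by
  ext j k
  simp only [conjTranspose_apply, parity, of_apply, apply_ite star, star_one, star_zero,
    neg_eq_iff_eq_neg, eq_comm (a := k)]

variable [NeZero d]

theorem parity_mul_self : parity d * parity d = 1 := by
  ext j k
  simp [parity, mul_apply, one_apply]

theorem neg_parity_mul_self : -parity d * -parity d = 1 := by
  rw [neg_mul_neg, parity_mul_self]

theorem trace_parity (hd : Odd d) : (parity d).trace = 1 := by
  simp only [trace, diag, parity, of_apply, eq_neg_iff_add_eq_zero, ← two_mul,
    (isUnit_two_of_odd hd).mul_right_eq_zero, Finset.sum_ite_eq', Finset.mem_univ, if_true]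

theorem rank_half_smul_one_add_parity (hd : Odd d) :
    ((1 / 2 : ℂ) • (1 + parity d)).rank = (d + 1) / 2 := by
  apply Nat.cast_injective (R := ℂ)
  rw [rank_half_smul_one_add parity_mul_self, trace_parity hd, card,
    Nat.cast_div (even_iff_two_dvd.mp hd.add_one) two_ne_zero, Nat.cast_add_one, Nat.cast_ofNat]

theorem rank_half_smul_one_add_neg_parity (hd : Odd d) :
    ((1 / 2 : ℂ) • (1 + -parity d)).rank = (d - 1) / 2 := by
  apply Nat.cast_injective (R := ℂ)
  rw [rank_half_smul_one_add neg_parity_mul_self, trace_neg, trace_parity hd,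
    card, Nat.cast_div (even_iff_two_dvd.mp (Nat.Odd.sub_odd hd odd_one)) two_ne_zero,
    Nat.cast_sub NeZero.one_le, Nat.cast_one, sub_eq_add_neg, Nat.cast_ofNat]

theorem tau_pow_self (hd : Odd d) : tau d ^ d = 1 := by
  have hd0 : (d : ℂ) ≠ 0 := Nat.cast_ne_zero.mpr (NeZero.ne d)
  rw [tau, hd.neg_pow, ← Complex.exp_nat_mul, mul_div_cancel₀ _ hd0, Complex.exp_pi_mul_I,
    neg_neg]

theorem tau_sq : tau d ^ 2 = stdAddChar (1 : ZMod d) := by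
  rw [tau, neg_sq, ← Complex.exp_nat_mul, ← Int.cast_one, stdAddChar_coe]
  push_cast
  ring_nf

theorem tau_eq_stdAddChar (hd : Odd d) : tau d = stdAddChar (2⁻¹ : ZMod d) := by
  refine hd.eq_of_sq_eq_sq_of_pow_eq_one (tau_pow_self hd) ?_ ?_
  · rw [← AddChar.map_nsmul_eq_pow, nsmul_eq_mul, natCast_self, zero_mul,
      AddChar.map_zero_eq_one]
  · rw [tau_sq, ← AddChar.map_nsmul_eq_pow, nsmul_eq_mul, Nat.cast_ofNat,
      two_mul_inv_two_of_odd hd]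

theorem tau_pow_val (hd : Odd d) (x : ZMod d) : tau d ^ x.val = stdAddChar (2⁻¹ * x) := by
  rw [tau_eq_stdAddChar hd, ← AddChar.map_nsmul_eq_pow, nsmul_eq_mul, natCast_zmod_val,
    mul_comm]

theorem disp_apply (hd : Odd d) (q : ZMod d × ZMod d) (j k : ZMod d) :
    Disp d q j k = if k = j - q.1 then stdAddChar (2⁻¹ * (q.2 * (q.1 + 2 * j))) else 0 := by
  simp only [Disp, of_apply, tau_pow_val hd, eq_sub_iff_add_eq, eq_comm (a := k + q.1)]

theorem disp_mul_mul_conjTranspose_apply (hd : Odd d) (q : ZMod d × ZMod d)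
    (M : Matrix (ZMod d) (ZMod d) ℂ) (j k : ZMod d) :
    (Disp d q * M * (Disp d q)ᴴ) j k = stdAddChar (q.2 * (j - k)) * M (j - q.1) (k - q.1) := by
  simp only [mul_apply, conjTranspose_apply, disp_apply hd, ite_mul, zero_mul, mul_ite,
    mul_zero, Finset.sum_ite_eq', Finset.mem_univ, if_true, apply_ite star, star_zero]
  rw [mul_right_comm, Complex.star_def, ← AddChar.map_neg_eq_conj, ← AddChar.map_add_eq_mul]
  congr 2
  linear_combination (q.2 * (j - k)) * two_mul_inv_two_of_odd hd

theorem disp_mul_conjTranspose (hd : Odd d) (q : ZMod d × ZMod d) :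
    Disp d q * (Disp d q)ᴴ = 1 := by
  ext j k
  have h := disp_mul_mul_conjTranspose_apply hd q 1 j k
  rw [Matrix.mul_one] at h
  rcases eq_or_ne j k with rfl | hjk
  · simp [h]
  · simp [h, hjk]

noncomputable def phasePoint (d : ℕ) [NeZero d] (q : ZMod d × ZMod d) :
    Matrix (ZMod d) (ZMod d) ℂ :=
  Disp d q * parity d * (Disp d q)ᴴ

theorem phasePoint_apply (hd : Odd d) (q : ZMod d × ZMod d) (j k : ZMod d) :
    phasePoint d q j k = if j + k = 2 * q.1 then stdAddChar (q.2 * (j - k)) else 0 := by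
  have hiff : j - q.1 = -(k - q.1) ↔ j + k = 2 * q.1 := by
    constructor <;> intro h <;> linear_combination h
  simp only [phasePoint, disp_mul_mul_conjTranspose_apply hd, parity, of_apply, hiff, mul_ite,
    mul_one, mul_zero]

theorem sum_phasePoint (hd : Odd d) : ∑ q, phasePoint d q = (d : ℂ) • 1 := by
  ext j k
  simp only [Matrix.sum_apply, Fintype.sum_prod_type, phasePoint_apply hd, Finset.sum_ite_irrel,
    Finset.sum_const_zero, sum_stdAddChar_mul, sub_eq_zero, eq_two_mul_iff_of_odd hd,
    Finset.sum_ite_eq', Finset.mem_univ, if_true, Matrix.smul_apply, one_apply, smul_eq_mul,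
    mul_ite, mul_one, mul_zero]

theorem trace_phasePoint (hd : Odd d) (q : ZMod d × ZMod d) : (phasePoint d q).trace = 1 := by
  simp only [trace, diag, phasePoint_apply hd, ← two_mul, (isUnit_two_of_odd hd).mul_right_inj,
    sub_self, mul_zero, AddChar.map_zero_eq_one, Finset.sum_ite_eq', Finset.mem_univ, if_true]

theorem trace_phasePoint_mul_phasePoint (hd : Odd d) {q r : ZMod d × ZMod d} (hqr : q ≠ r) :
    (phasePoint d q * phasePoint d r).trace = 0 := by
  have h2 := isUnit_two_of_odd hd
  have hdiag : ∀ j, (phasePoint d q * phasePoint d r) j j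
      = if q.1 = r.1 then stdAddChar (q.2 * (j - (2 * q.1 - j)) + r.2 * (2 * q.1 - j - j))
        else 0 := by
    intro j
    rw [mul_apply, Finset.sum_eq_single (2 * q.1 - j)]
    · rw [phasePoint_apply hd, phasePoint_apply hd, if_pos (by ring), sub_add_cancel]
      simp only [h2.mul_right_inj, mul_ite, mul_zero, AddChar.map_add_eq_mul]
    · intro k _ hk
      rw [phasePoint_apply hd, if_neg (fun h => hk (by linear_combination h)), zero_mul]
    · simp
  rw [trace]
  simp only [diag, hdiag]
  split_ifs with h1
  · have hc : 2 * (q.2 - r.2) ≠ 0 := by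
      rw [Ne, h2.mul_right_eq_zero, sub_eq_zero]
      exact fun h => hqr (Prod.ext h1 h)
    calc ∑ j, stdAddChar (q.2 * (j - (2 * q.1 - j)) + r.2 * (2 * q.1 - j - j))
        = (∑ j, stdAddChar (j * (2 * (q.2 - r.2))))
            * stdAddChar (-(q.1 * (2 * (q.2 - r.2)))) := by
          rw [Finset.sum_mul]
          refine Finset.sum_congr rfl fun j _ => ?_
          rw [← AddChar.map_add_eq_mul, h1]
          congr 1
          ring
      _ = 0 := by rw [sum_stdAddChar_mul, if_neg hc, zero_mul]
  · exact Finset.sum_const_zero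

end WignerFrames

/-- For odd `d`, with `P` the parity matrix, the Wigner projectors
`Π±_W = (1/2) • (1 ± P)` are orthogonal projections of rank `(d±1)/2` whose WH orbits
`{D q * Π±_W * (D q)ᴴ}` are symmetric tight fusion frames: they sum to `(d(d±1)/2) • 1`
and have pairwise traces `(d±2)/4`. -/
theorem stmt_13 (d : ℕ) [NeZero d] (hd : Odd d)
    (P : Matrix (ZMod d) (ZMod d) ℂ)
    (hP : ∀ j k : ZMod d, P j k = if j = -k then 1 else 0)
    (Pp Pm : Matrix (ZMod d) (ZMod d) ℂ)
    (hPp : Pp = (1 / 2 : ℂ) • (1 + P))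
    (hPm : Pm = (1 / 2 : ℂ) • (1 - P)) :
    Pp.IsHermitian ∧ Pp * Pp = Pp ∧ Pp.rank = (d + 1) / 2 ∧
    Pm.IsHermitian ∧ Pm * Pm = Pm ∧ Pm.rank = (d - 1) / 2 ∧
    (∑ q : ZMod d × ZMod d, Disp d q * Pp * (Disp d q)ᴴ
        = ((d : ℂ) * ((d : ℂ) + 1) / 2) • 1) ∧
    (∑ q : ZMod d × ZMod d, Disp d q * Pm * (Disp d q)ᴴ
        = ((d : ℂ) * ((d : ℂ) - 1) / 2) • 1) ∧
    (∀ q r : ZMod d × ZMod d, q ≠ r →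
      (Disp d q * Pp * (Disp d q)ᴴ * (Disp d r * Pp * (Disp d r)ᴴ)).trace
        = ((d : ℂ) + 2) / 4) ∧
    (∀ q r : ZMod d × ZMod d, q ≠ r →
      (Disp d q * Pm * (Disp d q)ᴴ * (Disp d r * Pm * (Disp d r)ᴴ)).trace
        = ((d : ℂ) - 2) / 4) := by
  obtain rfl : P = parity d := Matrix.ext hP
  -- `-P` is again a Hermitian involution, so `Π⁻` is treated as `(1 + (-P))/2`.
  rw [sub_eq_add_neg] at hPm
  subst hPp hPm
  have hpos : ∀ q, Disp d q * parity d * (Disp d q)ᴴ = phasePoint d q := fun _ => rfl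
  have hneg : ∀ q, Disp d q * -parity d * (Disp d q)ᴴ = -phasePoint d q := fun q => by
    rw [Matrix.mul_neg, Matrix.neg_mul, hpos]
  have hcard : (Fintype.card (ZMod d × ZMod d) : ℂ) = d * d := by
    rw [Fintype.card_prod, ZMod.card, Nat.cast_mul]
  simp only [mul_half_smul_one_add_mul_conjTranspose (disp_mul_conjTranspose hd _), hpos,
    hneg]
  refine ⟨isHermitian_half_smul_one_add (parity_isHermitian (d := d)),
    isIdempotentElem_half_smul_one_add parity_mul_self, rank_half_smul_one_add_parity hd,
    isHermitian_half_smul_one_add (parity_isHermitian (d := d)).neg,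
    isIdempotentElem_half_smul_one_add neg_parity_mul_self,
    rank_half_smul_one_add_neg_parity hd, ?_, ?_, fun q r hqr => ?_, fun q r hqr => ?_⟩
  · rw [sum_half_smul_one_add (sum_phasePoint hd), hcard]
    congr 1
    ring
  · rw [sum_half_smul_one_add (c := -d) (by simp [sum_phasePoint hd]), hcard]
    congr 1
    ring
  · rw [trace_half_smul_one_add_mul, trace_phasePoint hd, trace_phasePoint hd,
      trace_phasePoint_mul_phasePoint hd hqr, ZMod.card]
    ring
  · rw [trace_half_smul_one_add_mul, trace_neg, trace_neg, trace_phasePoint hd,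
      trace_phasePoint hd, neg_mul_neg, trace_phasePoint_mul_phasePoint hd hqr, ZMod.card]
    ring
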